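/- For k < ω and n < k, the set F(ω^k)^r_n equals {β ⊏ ω^k : CB(β) = n, i(β) > r, and every β' with β ⊏ β' ⊏ ω^k has i(β') > r}, where i(γ) is the last coefficient of the Cantor normal form of γ. -/

import Mathlib

open Ordinal

universe u

/-- Cantor–Bendixson rank: the last exponent of the Cantor normal form (`CB 0 = 0`). -/
noncomputable def CB (o : Ordinal) : Ordinal :=
  ((Ordinal.CNF Ordinal.omega0 o).getLast?).elim 0 Prod.fst

/-- The last coefficient of the Cantor normal form. -/
noncomputable def lastCoeff (o : Ordinal) : Ordinal :=
  ((Ordinal.CNF Ordinal.omega0 o).getLast?).elim 0 Prod.snd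

/-- The position of `o` in its fan: the last coefficient of the Cantor normal form,
with the convention `i(n) = n + 1` for natural numbers `n` (virtually omitting `0`). -/
noncomputable def placeInFan (o : Ordinal) : Ordinal :=
  if o < Ordinal.omega0 then o + 1 else lastCoeff o

/-- The anti-tree order: `treeOrd β α` iff `α = β + ω ^ γ` for some `γ > CB β`. -/
def treeOrd (β α : Ordinal) : Prop :=
  ∃ γ : Ordinal, CB β < γ ∧ α = β + Ordinal.omega0 ^ γ

/-- The immediate `treeOrd`-successor of `β`. -/
noncomputable def treeSucc (β : Ordinal) : Ordinal :=
  β + Ordinal.omega0 ^ (CB β + 1)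

/-- The set of immediate `treeOrd`-predecessors of `α`. -/
def subfan (α : Ordinal) : Set Ordinal := {γ | treeSucc γ = α}

/-- The fan of `β`: the set of immediate predecessors of the immediate successor of `β`. -/
def fan (β : Ordinal) : Set Ordinal := subfan (treeSucc β)

open Classical in
/-- The order type of a set of ordinals: the unique `δ` with `S ≃o Set.Iio δ` (0 if none). -/
noncomputable def otp (S : Set Ordinal.{u}) : Ordinal.{u} :=
  if h : ∃ δ : Ordinal.{u}, Nonempty (S ≃o Set.Iio δ) then h.choose else 0

/-- The image of `α ∈ S` under the unique order-preserving bijection of `S` with `otp S`. -/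
noncomputable def ordIndex (S : Set Ordinal) (α : Ordinal) : Ordinal :=
  otp {x | x ∈ S ∧ x < α}

/-- `I` is closed in the ordinal `δ` (with its order topology). -/
def closedIn (I : Set Ordinal) (δ : Ordinal) : Prop :=
  IsClosed {x : Set.Iio δ | (x : Ordinal) ∈ I}

/-- `X` is closed in its supremum. -/
def ClosedInSup (X : Set Ordinal) : Prop := closedIn X (sSup X)

/-- `I` is a skeleton of the ordinal `δ`. -/
def IsSkelOrd (I : Set Ordinal) (δ : Ordinal) : Prop :=
  I ⊆ Set.Iio δ ∧ closedIn I δ ∧ otp I = δ ∧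
    ∀ α ∈ I, ∀ β ∈ I, (treeOrd α β ↔ treeOrd (ordIndex I α) (ordIndex I β))

/-- `I` is a skeleton of the set `J`. -/
def IsSkelSet (I J : Set Ordinal) : Prop :=
  I ⊆ J ∧ IsSkelOrd (ordIndex J '' I) (otp J)

/-- `I` is an `n`-skeleton of the set `J`. -/
def IsNSkelSet (n : ℕ) (I J : Set Ordinal) : Prop :=
  IsSkelSet I J ∧
    ∀ α ∈ J, (fan α ∩ I).Nonempty → placeInFan (ordIndex J α) ≤ (n : Ordinal) → α ∈ I

/-- A collection `(I i)_{i < γ}` of subsets of `δ` is fan preserving. -/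
def FanPreserving (γ : Ordinal) (I : Ordinal → Set Ordinal) (δ : Ordinal) : Prop :=
  ∀ α ≤ γ, Order.IsSuccLimit α → ∀ β < δ, (∀ i < α, (fan β ∩ I i).Infinite) →
    (fan β ∩ ⋂ i ∈ Set.Iio α, I i).Infinite

/-- Sum of the first `i` terms `ω ^ γ` of a Cantor normal form list. -/
noncomputable def partialSum (l : List Ordinal) (i : ℕ) : Ordinal :=
  ((l.take i).map fun γ => Ordinal.omega0 ^ γ).sum

/-- The `i`-th component `C_i` of the Cantor normal form decomposition (for `1 ≤ i`). -/
noncomputable def comp (l : List Ordinal) (i : ℕ) : Set Ordinal :=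
  {β | partialSum l (i - 1) < β ∧ β ≤ partialSum l i}

/-- `subtree α` is `{α} ∪ {β : β ⊏ α}`. -/
def subtree (α : Ordinal) : Set Ordinal := insert α {β | treeOrd β α}

/-- `Tlevel α n` is the set of elements of CB rank `n` in the tree below `α`. -/
def Tlevel (α : Ordinal) (n : ℕ) : Set Ordinal := {β | β ∈ subtree α ∧ CB β = (n : Ordinal)}

/-- `FpowAux k r j = F(ω^k)^r_{k-j}`, defined by downward recursion. -/
noncomputable def FpowAux (k r : ℕ) : ℕ → Set Ordinal
  | 0 => {Ordinal.omega0 ^ (k : Ordinal)}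
  | j + 1 => {γ | treeSucc γ ∈ FpowAux k r j ∧ (r : Ordinal) < placeInFan γ}

/-- `F(ω^k)^r_n` (for `n ≤ k`). -/
noncomputable def Fpow (k r n : ℕ) : Set Ordinal := FpowAux k r (k - n)

/-- `F(α)^r_n`: the copy of `F(ω^k)^r_n` in the tree below `α`, where `k = CB α`. -/
noncomputable def Fgen (α : Ordinal) (r n : ℕ) : Set Ordinal :=
  {β | β ∈ subtree α ∧ ∃ k : ℕ, (k : Ordinal) = CB α ∧ ordIndex (subtree α) β ∈ Fpow k r n}

/-- The collection of `r`-large subsets of `Tlevel α n`. -/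
def LargeR (α : Ordinal) (r n : ℕ) : Set (Set Ordinal) :=
  {A | A ⊆ Tlevel α n ∧ Fgen α r n ⊆ A}

/-- The collection of large subsets of `Tlevel α n`. -/
def Large (α : Ordinal) (n : ℕ) : Set (Set Ordinal) := ⋃ r : ℕ, LargeR α r n

/-- The closed ordinal partition relation `β →_cl (α₀, α₁)²`. -/
def ClRamseyProp (β α₀ α₁ : Ordinal) : Prop :=
  ∀ c : Ordinal → Ordinal → Fin 2,
    ∃ i : Fin 2, ∃ X : Set Ordinal, X ⊆ Set.Iio β ∧
      otp X = (if i = 0 then α₀ else α₁) ∧ ClosedInSup X ∧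
      ∀ x ∈ X, ∀ y ∈ X, x < y → c x y = i

/-!
Since `CB (β + ω ^ γ) = γ` for every `β`, the ordinals above `β` in the anti-tree order form
the chain `β + ω ^ γ`, `CB β < γ`, whose least element is `treeSucc β`. One step of the
recursion defining `F(ω^k)^r` therefore moves from `treeSucc β` down to `β`, and the condition
`r < i(·)` accumulates along the whole path from `β` up to `ω ^ k`.
-/

theorem CB_opow_mul_add {e x y : Ordinal} (hx : x ≠ 0) (hxω : x < ω) (hy : y < ω ^ e) :
    CB (ω ^ e * x + y) = if y = 0 then e else CB y := by
  unfold CB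
  rw [CNF.opow_mul_add one_lt_omega0 hx hxω hy]
  split_ifs with hy0
  · simp [hy0]
  · rw [CNF.ne_zero hy0, List.getLast?_cons_cons]

theorem CB_opow_mul {e x : Ordinal} (hx : x ≠ 0) (hxω : x < ω) : CB (ω ^ e * x) = e := by
  simpa using CB_opow_mul_add (y := 0) hx hxω (opow_pos e omega0_pos)

theorem CB_opow (e : Ordinal) : CB (ω ^ e) = e := by
  simpa using CB_opow_mul (e := e) one_ne_zero one_lt_omega0

theorem CB_add_opow (β γ : Ordinal) : CB (β + ω ^ γ) = γ := by
  induction β using CNF.rec ω with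
  | H0 => rw [zero_add, CB_opow]
  | H β hβ IH =>
    set e := log ω β
    set x := β / ω ^ e
    set y := β % ω ^ e
    have hβ_eq : ω ^ e * x + y = β := div_add_mod β _
    have hx : x ≠ 0 := (div_opow_log_pos ω hβ).ne'
    have hxω : x < ω := div_opow_log_lt β one_lt_omega0
    have hy : y < ω ^ e := mod_lt β (opow_pos e omega0_pos).ne'
    rcases lt_trichotomy γ e with hγe | rfl | heγ
    · have hyγ : y + ω ^ γ < ω ^ e :=
        isPrincipal_add_omega0_opow e hy ((opow_lt_opow_iff_right one_lt_omega0).2 hγe)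
      rw [← hβ_eq, add_assoc, CB_opow_mul_add hx hxω hyγ, if_neg (by simp), IH]
    · have hxω' : x + 1 < ω := isSuccLimit_omega0.add_one_lt hxω
      rw [← hβ_eq, add_assoc, add_omega0_opow hy, ← mul_add_one, CB_opow_mul (by simp) hxω']
    · rw [add_omega0_opow ((lt_opow_iff_log_lt one_lt_omega0 hβ).2 heγ), CB_opow]

theorem omega0_opow_add_opow_of_lt {γ δ : Ordinal} (h : γ < δ) : ω ^ γ + ω ^ δ = ω ^ δ :=
  add_omega0_opow ((opow_lt_opow_iff_right one_lt_omega0).2 h)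

theorem CB_lt_of_treeOrd {β α : Ordinal} (h : treeOrd β α) : CB β < CB α := by
  obtain ⟨γ, hγ, rfl⟩ := h
  rwa [CB_add_opow]

theorem treeOrd.trans {β β' α : Ordinal} (h₁ : treeOrd β β') (h₂ : treeOrd β' α) :
    treeOrd β α := by
  obtain ⟨γ, hγ, rfl⟩ := h₁
  obtain ⟨δ, hδ, rfl⟩ := h₂
  rw [CB_add_opow] at hδ
  exact ⟨δ, hγ.trans hδ, by rw [add_assoc, omega0_opow_add_opow_of_lt hδ]⟩

theorem treeOrd_treeSucc (β : Ordinal) : treeOrd β (treeSucc β) :=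
  ⟨CB β + 1, lt_add_one _, rfl⟩

theorem CB_treeSucc (β : Ordinal) : CB (treeSucc β) = CB β + 1 :=
  CB_add_opow _ _

theorem treeSucc_eq_iff {β α : Ordinal} : treeSucc β = α ↔ treeOrd β α ∧ CB α = CB β + 1 := by
  constructor
  · rintro rfl
    exact ⟨treeOrd_treeSucc β, CB_treeSucc β⟩
  · rintro ⟨⟨γ, -, rfl⟩, hα⟩
    rw [CB_add_opow] at hα
    rw [treeSucc, hα]

theorem treeOrd.eq_treeSucc_or_treeSucc_treeOrd {β α : Ordinal} (h : treeOrd β α) :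
    α = treeSucc β ∨ treeOrd (treeSucc β) α := by
  obtain ⟨γ, hγ, rfl⟩ := h
  rcases (Order.add_one_le_of_lt hγ).lt_or_eq with hlt | rfl
  · refine .inr ⟨γ, by rwa [CB_treeSucc], ?_⟩
    rw [treeSucc, add_assoc, omega0_opow_add_opow_of_lt hlt]
  · exact .inl rfl

theorem forall_treeOrd_between_iff {β α : Ordinal} (h : treeOrd (treeSucc β) α)
    (p : Ordinal → Prop) :
    (∀ β', treeOrd β β' → treeOrd β' α → p β') ↔
      p (treeSucc β) ∧ ∀ β', treeOrd (treeSucc β) β' → treeOrd β' α → p β' := by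
  refine ⟨fun hp => ⟨hp _ (treeOrd_treeSucc β) h,
    fun β' h₁ h₂ => hp β' ((treeOrd_treeSucc β).trans h₁) h₂⟩, ?_⟩
  rintro ⟨hsucc, hp⟩ β' h₁ h₂
  rcases h₁.eq_treeSucc_or_treeSucc_treeOrd with rfl | h₁
  exacts [hsucc, hp β' h₁ h₂]

def levelWithPath (α m : Ordinal) (p : Ordinal → Prop) : Set Ordinal :=
  {β | treeOrd β α ∧ CB β = m ∧ p β ∧ ∀ β', treeOrd β β' → treeOrd β' α → p β'}

theorem setOf_treeSucc_eq_and {α m : Ordinal} (hα : CB α = m + 1) (p : Ordinal → Prop) :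
    {β | treeSucc β = α ∧ p β} = levelWithPath α m p := by
  ext β
  simp only [Set.mem_ofPred_eq, levelWithPath, treeSucc_eq_iff, hα]
  constructor
  · rintro ⟨⟨hβα, hCB⟩, hp⟩
    have hCB : CB β = m := (Order.add_one_inj.1 hCB).symm
    refine ⟨hβα, hCB, hp, fun β' h₁ h₂ => ?_⟩
    have hβ' : m + 1 ≤ CB β' := hCB ▸ Order.add_one_le_of_lt (CB_lt_of_treeOrd h₁)
    exact absurd (CB_lt_of_treeOrd h₂) (by rw [hα]; exact hβ'.not_gt)
  · rintro ⟨hβα, rfl, hp, -⟩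
    exact ⟨⟨hβα, rfl⟩, hp⟩

theorem setOf_treeSucc_mem_levelWithPath {α m : Ordinal} (hm : m + 1 < CB α)
    (p : Ordinal → Prop) :
    {β | treeSucc β ∈ levelWithPath α (m + 1) p ∧ p β} = levelWithPath α m p := by
  ext β
  simp only [Set.mem_ofPred_eq, levelWithPath, CB_treeSucc, Order.add_one_inj]
  constructor
  · rintro ⟨⟨hsα, hCB, hsucc, hp⟩, hβ⟩
    exact ⟨(treeOrd_treeSucc β).trans hsα, hCB, hβ,
      (forall_treeOrd_between_iff hsα p).2 ⟨hsucc, hp⟩⟩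
  · rintro ⟨hβα, hCB, hβ, hp⟩
    have hsα : treeOrd (treeSucc β) α := by
      refine hβα.eq_treeSucc_or_treeSucc_treeOrd.resolve_left fun hα => ?_
      rw [hα, CB_treeSucc, hCB] at hm
      exact hm.false
    exact ⟨⟨hsα, hCB, (forall_treeOrd_between_iff hsα p).1 hp⟩, hβ⟩

theorem FpowAux_eq_levelWithPath (k r : ℕ) {j : ℕ} (hj : 1 ≤ j) (hjk : j ≤ k) :
    FpowAux k r j = levelWithPath (ω ^ (k : Ordinal)) ((k - j : ℕ) : Ordinal)
      (fun β => (r : Ordinal) < placeInFan β) := by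
  induction j, hj using Nat.le_induction with
  | base =>
    refine setOf_treeSucc_eq_and ?_ _
    rw [CB_opow, ← Nat.cast_add_one, Nat.sub_add_cancel hjk]
  | succ j hj IH =>
    have hkj : k - j = k - (j + 1) + 1 := by omega
    rw [FpowAux, IH (by omega), hkj, Nat.cast_add_one]
    refine setOf_treeSucc_mem_levelWithPath ?_ _
    rw [CB_opow, ← Nat.cast_add_one, Nat.cast_lt]
    omega

theorem stmt12 (k n r : ℕ) (hn : n < k) :
    Fpow k r n = {β | treeOrd β (Ordinal.omega0 ^ (k : Ordinal)) ∧ CB β = (n : Ordinal) ∧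
      (r : Ordinal) < placeInFan β ∧
      ∀ β', treeOrd β β' → treeOrd β' (Ordinal.omega0 ^ (k : Ordinal)) →
        (r : Ordinal) < placeInFan β'} := by
  rw [Fpow, FpowAux_eq_levelWithPath k r (by omega) (by omega), Nat.sub_sub_self hn.le]
  rfl
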